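/- arXiv:1306.1242 — 3 statements merged into one kernel-verified Lean document; each statement's English description precedes it below -/
import Mathlib

section
/- Let k be an algebraically closed field of characteristic zero and n ≥ 1. Two semisimple (diagonalizable) elements x and y of GSp_{2n}(k) are conjugate by an element of GSp_{2n}(k) if and only if they have the same symplectic multiplier ν(x) = ν(y) and are conjugate by an element of GL_{2n}(k). -/
open Matrix

noncomputable section

/-- 2n×2n matrices, indexed by `Fin n ⊕ Fin n`. -/
abbrev Mat (n : ℕ) (k : Type*) := Matrix (Fin n ⊕ Fin n) (Fin n ⊕ Fin n) k

/-- The standard symplectic form matrix `J_{2n} = [[0, 1], [-1, 0]]`. -/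
def Jmat (n : ℕ) (k : Type*) [Field k] : Mat n k := fromBlocks 0 1 (-1) 0

/-- `A ∈ GSp_{2n}(k)` with symplectic multiplier `ν`. -/
def inGSp {k : Type*} [Field k] (n : ℕ) (A : Mat n k) (ν : k) : Prop :=
  IsUnit A.det ∧ ν ≠ 0 ∧ Aᵀ * Jmat n k * A = ν • Jmat n k

/-- A square matrix is semisimple (diagonalizable over `k`). -/
def IsDiagonalizable {k : Type*} [Field k] {m : Type*} [Fintype m] [DecidableEq m]
    (A : Matrix m m k) : Prop :=
  ∃ (P : Matrix m m k) (d : m → k), IsUnit P.det ∧ A = P * Matrix.diagonal d * P⁻¹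

/-!
Conjugation preserves multipliers, so `GSp`-conjugate elements have equal multipliers. Conversely,
if `h x h⁻¹ = y` with `h ∈ GL`, then `K = hᵀ J h` is a second nondegenerate alternating form that
`x` scales by `ν`; hence `M = J⁻¹ K` commutes with `x` and is self-adjoint for `J`. Over an
algebraically closed field of characteristic `≠ 2` an invertible `M` has a square root `c` that is a
polynomial in `M` (interpolate square roots at the eigenvalues, then run Newton's iteration). Such a
`c` commutes with `x` and satisfies `cᵀ J c = J M = K`, so `h c⁻¹ ∈ Sp` conjugates `x` to `y`.
-/

open Polynomial

theorem exists_mul_self_eq_of_isNilpotent {R : Type*} [CommRing R] {a q : R}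
    (hq : IsUnit (2 * q)) (hnil : IsNilpotent (q * q - a)) : ∃ r, r * r = a := by
  set e := q * q - a
  -- Newton's iteration `r ↦ r - (r * r - a) / (2 * r)` squares the error term.
  have newton : ∀ s : ℕ, ∃ r, IsUnit (2 * r) ∧ e ^ 2 ^ s ∣ r * r - a := by
    intro s
    induction s with
    | zero => exact ⟨q, hq, by rw [pow_zero, pow_one]⟩
    | succ s ih =>
      obtain ⟨r, hr, c, hc⟩ := ih
      obtain ⟨u, hu⟩ := hr.exists_right_inv
      have hnil' : IsNilpotent (-(2 * u * c) * e ^ 2 ^ s) :=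
        Commute.isNilpotent_mul_left (Commute.all _ _) (hnil.pow_of_pos (by positivity))
      refine ⟨r - u * (r * r - a), ?_, u * u * c * c, ?_⟩
      · convert hnil'.isUnit_add_left_of_commute hr (Commute.all _ _) using 1
        rw [hc]; ring
      · rw [pow_succ, pow_mul]
        linear_combination (-(r * r - a)) * hu + u * u * (r * r - a + e ^ 2 ^ s * c) * hc
  obtain ⟨N, hN⟩ := hnil
  obtain ⟨r, -, hr⟩ := newton N
  refine ⟨r, sub_eq_zero.1 (zero_dvd_iff.1 ?_)⟩
  rwa [pow_eq_zero_of_le Nat.lt_two_pow_self.le hN] at hr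

theorem Polynomial.Splits.dvd_pow_card_roots {k : Type*} [Field k] {f p : k[X]} (hf : f.Splits)
    (hf0 : f ≠ 0) (h : ∀ t ∈ f.roots, p.IsRoot t) : f ∣ p ^ Multiset.card f.roots := by
  have key : (f.roots.map (X - C ·)).prod ∣ (f.roots.map fun _ => p).prod :=
    Multiset.prod_dvd_prod_of_dvd _ _ fun t ht => dvd_iff_isRoot.2 (h t ht)
  rwa [Multiset.map_const', Multiset.prod_replicate, ← C_mul_dvd (leadingCoeff_ne_zero.2 hf0),
    ← hf.eq_prod_roots] at key

theorem Polynomial.exists_dvd_mul_self_sub_X {k : Type*} [Field k] [IsAlgClosed k]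
    [NeZero (2 : k)] {f : k[X]} (hf : f ≠ 0) (h0 : ¬ f.IsRoot 0) : ∃ q, f ∣ q * q - X := by
  classical
  choose sqrt hsqrt using IsAlgClosed.exists_eq_mul_self (k := k)
  set q₀ := Lagrange.interpolate f.roots.toFinset id sqrt
  have hq₀ : ∀ t ∈ f.roots, q₀.eval t * q₀.eval t = t := fun t ht => by
    have hval : q₀.eval t = sqrt t := Lagrange.eval_interpolate_at_node (v := id) sqrt
      (Set.injOn_id _) (Multiset.mem_toFinset.2 ht)
    rw [hval, ← hsqrt]
  have hunit : IsUnit (AdjoinRoot.mk f (2 * q₀)) := by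
    have hcop : IsCoprime (2 * q₀) f := by
      refine (isCoprime_iff_aeval_ne_zero_of_isAlgClosed k k _ _).2 fun t => ?_
      by_cases ht : t ∈ f.roots
      · have ht0 : t ≠ 0 := by rintro rfl; exact h0 (isRoot_of_mem_roots ht)
        left
        simpa using ⟨two_ne_zero, fun h => ht0 (by rw [← hq₀ t ht, h, zero_mul])⟩
      · right
        simpa [mem_roots hf] using ht
    obtain ⟨u, v, huv⟩ := hcop
    refine IsUnit.of_mul_eq_one (AdjoinRoot.mk f u) ?_
    rw [← map_mul, mul_comm, ← sub_eq_of_eq_add huv.symm, map_sub, map_mul,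
      AdjoinRoot.mk_self, mul_zero, sub_zero, map_one]
  have hnil : IsNilpotent (AdjoinRoot.mk f q₀ * AdjoinRoot.mk f q₀ - AdjoinRoot.root f) := by
    refine ⟨Multiset.card f.roots, ?_⟩
    rw [← AdjoinRoot.mk_X, ← map_mul, ← map_sub, ← map_pow, AdjoinRoot.mk_eq_zero]
    exact (IsAlgClosed.splits f).dvd_pow_card_roots hf fun t ht => by simp [hq₀ t ht]
  obtain ⟨r, hr⟩ := exists_mul_self_eq_of_isNilpotent
    (by rwa [map_mul, map_ofNat] at hunit) hnil
  obtain ⟨q, rfl⟩ := AdjoinRoot.mk_surjective r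
  exact ⟨q, by rwa [← AdjoinRoot.mk_eq_zero, map_sub, map_mul, AdjoinRoot.mk_X, sub_eq_zero]⟩

theorem minpoly.not_isRoot_zero_of_isUnit {k A : Type*} [Field k] [Ring A] [Algebra k A] {M : A}
    (hM : IsIntegral k M) (hu : IsUnit M) : ¬ (minpoly k M).IsRoot 0 := by
  intro h0
  obtain ⟨g, hg⟩ : X ∣ minpoly k M := X_dvd_iff.2 (by rw [coeff_zero_eq_eval_zero]; exact h0)
  have hg0 : g ≠ 0 := by rintro rfl; exact minpoly.ne_zero hM (by simpa using hg)
  have hgM : Polynomial.aeval M g = 0 := by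
    have := minpoly.aeval k M
    rwa [hg, map_mul, aeval_X, hu.mul_right_eq_zero] at this
  have := natDegree_le_of_dvd (minpoly.dvd k M hgM) hg0
  rw [hg, natDegree_mul X_ne_zero hg0, natDegree_X] at this
  omega

theorem SemiconjBy.aeval {R A : Type*} [CommSemiring R] [Semiring A] [Algebra R A] {j a b : A}
    (h : SemiconjBy j a b) (q : R[X]) : SemiconjBy j (aeval a q) (aeval b q) := by
  rw [SemiconjBy, aeval_eq_sum_range, aeval_eq_sum_range, Finset.mul_sum, Finset.sum_mul]
  exact Finset.sum_congr rfl fun i _ => (h.pow_right i).smul_right _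

theorem Matrix.transpose_aeval {R m : Type*} [CommSemiring R] [Fintype m] [DecidableEq m]
    (M : Matrix m m R) (q : R[X]) : (aeval M q)ᵀ = aeval Mᵀ q := by
  simp only [aeval_eq_sum_range, transpose_sum, transpose_smul, transpose_pow]

theorem exists_aeval_mul_self_eq {k A : Type*} [Field k] [IsAlgClosed k] [NeZero (2 : k)]
    [Ring A] [Algebra k A] {M : A} (hM : IsIntegral k M) (hu : IsUnit M) :
    ∃ q : k[X], aeval M q * aeval M q = M := by
  obtain ⟨q, hq⟩ := exists_dvd_mul_self_sub_X (minpoly.ne_zero hM)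
    (minpoly.not_isRoot_zero_of_isUnit hM hu)
  have := minpoly.dvd_iff.1 hq
  rw [map_sub, map_mul, aeval_X, sub_eq_zero] at this
  exact ⟨q, this⟩

section Jmat

variable {n : ℕ} {k : Type*} [Field k]

theorem Jmat_transpose : (Jmat n k)ᵀ = -Jmat n k := by
  simp [Jmat, fromBlocks_transpose, fromBlocks_neg]

theorem Jmat_mul_Jmat : Jmat n k * Jmat n k = -1 := by
  simp [Jmat, fromBlocks_multiply, ← fromBlocks_one, fromBlocks_neg]

theorem Jmat_mul_transpose : Jmat n k * (Jmat n k)ᵀ = 1 := by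
  rw [Jmat_transpose, Matrix.mul_neg, Jmat_mul_Jmat, neg_neg]

theorem isUnit_det_Jmat : IsUnit (Jmat n k).det :=
  isUnit_det_of_right_inverse Jmat_mul_transpose

theorem Jmat_ne_zero (hn : 0 < n) : Jmat n k ≠ 0 := fun h => by
  simpa [Jmat] using congrFun (congrFun h (Sum.inl ⟨0, hn⟩)) (Sum.inr ⟨0, hn⟩)

end Jmat

namespace inGSp

variable {n : ℕ} {k : Type*} [Field k] {A B : Mat n k} {a b : k}

theorem mul (hA : inGSp n A a) (hB : inGSp n B b) : inGSp n (A * B) (a * b) := by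
  refine ⟨by rw [det_mul]; exact hA.1.mul hB.1, mul_ne_zero hA.2.1 hB.2.1, ?_⟩
  calc (A * B)ᵀ * Jmat n k * (A * B) = Bᵀ * (Aᵀ * Jmat n k * A) * B := by
        simp only [transpose_mul, Matrix.mul_assoc]
    _ = (a * b) • Jmat n k := by
        rw [hA.2.2, Matrix.mul_smul, Matrix.smul_mul, hB.2.2, smul_smul]

theorem inv (hA : inGSp n A a) : inGSp n A⁻¹ a⁻¹ := by
  refine ⟨isUnit_nonsing_inv_det A hA.1, inv_ne_zero hA.2.1, ?_⟩
  have hAT : IsUnit Aᵀ.det := by rw [det_transpose]; exact hA.1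
  calc (A⁻¹)ᵀ * Jmat n k * A⁻¹ = a⁻¹ • ((Aᵀ)⁻¹ * (Aᵀ * Jmat n k * A) * A⁻¹) := by
        rw [hA.2.2, Matrix.mul_smul, Matrix.smul_mul, smul_smul, inv_mul_cancel₀ hA.2.1,
          one_smul, transpose_nonsing_inv]
    _ = a⁻¹ • Jmat n k := by
        rw [Matrix.mul_assoc, Matrix.mul_assoc, mul_nonsing_inv _ hA.1, Matrix.mul_one,
          ← Matrix.mul_assoc, nonsing_inv_mul _ hAT, Matrix.one_mul]

theorem transpose (hA : inGSp n A a) : inGSp n Aᵀ a := by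
  refine ⟨by rw [det_transpose]; exact hA.1, hA.2.1, ?_⟩
  have hinv : Aᵀ * (-a⁻¹ • (Jmat n k * A * Jmat n k)) = 1 := by
    calc Aᵀ * (-a⁻¹ • (Jmat n k * A * Jmat n k)) = -a⁻¹ • ((Aᵀ * Jmat n k * A) * Jmat n k) := by
          simp only [Matrix.mul_smul, Matrix.mul_assoc]
      _ = 1 := by
          rw [hA.2.2, Matrix.smul_mul, Jmat_mul_Jmat, smul_smul, smul_neg, neg_mul,
            inv_mul_cancel₀ hA.2.1, neg_smul, one_smul, neg_neg]
  have h : a⁻¹ • (A * Jmat n k * Aᵀ) = Jmat n k :=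
    calc a⁻¹ • (A * Jmat n k * Aᵀ) = Jmat n k * ((-a⁻¹ • (Jmat n k * A * Jmat n k)) * Aᵀ) := by
          simp only [Matrix.smul_mul, Matrix.mul_neg, Matrix.mul_smul, ← Matrix.mul_assoc,
            Jmat_mul_Jmat, Matrix.neg_mul, Matrix.one_mul, neg_smul, smul_neg, neg_neg]
      _ = Jmat n k := by rw [mul_eq_one_comm.1 hinv, Matrix.mul_one]
  calc Aᵀᵀ * Jmat n k * Aᵀ = a • (a⁻¹ • (A * Jmat n k * Aᵀ)) := by
        rw [transpose_transpose, smul_smul, mul_inv_cancel₀ hA.2.1, one_smul]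
    _ = a • Jmat n k := by rw [h]

theorem multiplier_unique (hn : 0 < n) (hA : inGSp n A a) (hA' : inGSp n A b) : a = b :=
  smul_left_injective k (Jmat_ne_zero hn) (hA.2.2.symm.trans hA'.2.2)

theorem conj (hA : inGSp n A a) (hB : inGSp n B b) : inGSp n (A * B * A⁻¹) b := by
  have := (hA.mul hB).mul hA.inv
  rwa [mul_comm a b, mul_inv_cancel_right₀ hA.2.1] at this

end inGSp

section Conjugacy

variable {n : ℕ} {k : Type*} [Field k]

theorem exists_commute_transpose_mul_Jmat_mul_eq [IsAlgClosed k] [NeZero (2 : k)]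
    {x K : Mat n k} {ν : k} (hx : inGSp n x ν) (hK : Kᵀ = -K) (hKdet : IsUnit K.det)
    (hxK : xᵀ * K * x = ν • K) :
    ∃ c : Mat n k, IsUnit c.det ∧ Commute x c ∧ cᵀ * Jmat n k * c = K := by
  -- `Jᵀ = J⁻¹`, so `M = J⁻¹ K`.
  set M := (Jmat n k)ᵀ * K with hM
  have hJM : Jmat n k * M = K := by rw [← Matrix.mul_assoc, Jmat_mul_transpose, Matrix.one_mul]
  have hMT : SemiconjBy (Jmat n k) M Mᵀ := by
    rw [SemiconjBy, hJM, hM, transpose_mul, transpose_transpose, hK, Matrix.mul_assoc,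
      Jmat_mul_Jmat, Matrix.neg_mul, Matrix.mul_neg, Matrix.mul_one, neg_neg]
  have hxM : Commute x M := by
    have hxJ : x * (Jmat n k)ᵀ * xᵀ = ν • (Jmat n k)ᵀ := by
      simpa only [transpose_mul, transpose_transpose, transpose_smul, Matrix.mul_assoc]
        using congrArg transpose hx.transpose.2.2
    refine smul_right_injective _ hx.2.1 ?_
    calc ν • (x * M) = x * (Jmat n k)ᵀ * (xᵀ * K * x) := by
          rw [hxK, Matrix.mul_smul, hM, Matrix.mul_assoc]
      _ = ν • (M * x) := by
          rw [← Matrix.mul_assoc, ← Matrix.mul_assoc, hxJ, hM, Matrix.smul_mul, Matrix.smul_mul,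
            Matrix.mul_assoc]
  have hMdet : IsUnit M := by
    rw [isUnit_iff_isUnit_det, hM, det_mul, det_transpose]
    exact isUnit_det_Jmat.mul hKdet
  obtain ⟨q, hq⟩ := exists_aeval_mul_self_eq (IsIntegral.of_finite k M) hMdet
  refine ⟨aeval M q, ?_, hxM.aeval q, ?_⟩
  · have : IsUnit ((aeval M q).det * (aeval M q).det) := by
      rw [← det_mul, hq]; exact (isUnit_iff_isUnit_det M).1 hMdet
    exact isUnit_of_mul_isUnit_left this
  · rw [transpose_aeval, ← (hMT.aeval q).eq, Matrix.mul_assoc, hq, hJM]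

theorem inGSp_mul_inv_of_transpose_mul_Jmat_mul_eq {c h : Mat n k} (hc : IsUnit c.det)
    (hh : IsUnit h.det) (hch : cᵀ * Jmat n k * c = hᵀ * Jmat n k * h) : inGSp n (h * c⁻¹) 1 := by
  have hcT : IsUnit cᵀ.det := by rwa [det_transpose]
  refine ⟨by rw [det_mul]; exact hh.mul (isUnit_nonsing_inv_det c hc), one_ne_zero, ?_⟩
  calc (h * c⁻¹)ᵀ * Jmat n k * (h * c⁻¹) = (cᵀ)⁻¹ * (cᵀ * Jmat n k * c) * c⁻¹ := by
        rw [hch, transpose_mul, transpose_nonsing_inv]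
        simp only [Matrix.mul_assoc]
    _ = (1 : k) • Jmat n k := by
        rw [one_smul, Matrix.mul_assoc, Matrix.mul_assoc, mul_nonsing_inv _ hc, Matrix.mul_one,
          ← Matrix.mul_assoc, nonsing_inv_mul _ hcT, Matrix.one_mul]

theorem exists_inGSp_conj_eq [IsAlgClosed k] [NeZero (2 : k)] {x y h : Mat n k} {ν : k}
    (hx : inGSp n x ν) (hy : inGSp n y ν) (hh : IsUnit h.det) (hxy : h * x * h⁻¹ = y) :
    ∃ g, inGSp n g 1 ∧ g * x * g⁻¹ = y := by
  set K := hᵀ * Jmat n k * h with hKdef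
  have hK : Kᵀ = -K := by
    rw [hKdef, transpose_mul, transpose_mul, transpose_transpose, Jmat_transpose]
    simp only [Matrix.neg_mul, Matrix.mul_neg, Matrix.mul_assoc]
  have hKdet : IsUnit K.det := by
    rw [hKdef, det_mul, det_mul, det_transpose]
    exact (hh.mul isUnit_det_Jmat).mul hh
  have hxK : xᵀ * K * x = ν • K := by
    have hhx : h * x = y * h := by
      rw [← hxy, Matrix.mul_assoc _ h⁻¹, nonsing_inv_mul _ hh, Matrix.mul_one]
    calc xᵀ * K * x = (h * x)ᵀ * Jmat n k * (h * x) := by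
          simp only [hKdef, transpose_mul, Matrix.mul_assoc]
      _ = hᵀ * (yᵀ * Jmat n k * y) * h := by
          rw [hhx, transpose_mul]
          simp only [Matrix.mul_assoc]
      _ = ν • K := by rw [hy.2.2, Matrix.mul_smul, Matrix.smul_mul]
  obtain ⟨c, hc, hxc, hcK⟩ := exists_commute_transpose_mul_Jmat_mul_eq hx hK hKdet hxK
  refine ⟨h * c⁻¹, inGSp_mul_inv_of_transpose_mul_Jmat_mul_eq hc hh hcK, ?_⟩
  rw [Matrix.mul_inv_rev, nonsing_inv_nonsing_inv c hc, ← hxy]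
  calc h * c⁻¹ * x * (c * h⁻¹) = h * (c⁻¹ * (x * c)) * h⁻¹ := by simp only [Matrix.mul_assoc]
    _ = h * x * h⁻¹ := by
        rw [hxc.eq, ← Matrix.mul_assoc c⁻¹, nonsing_inv_mul _ hc, Matrix.one_mul]

end Conjugacy

theorem gsp_conjugacy_general {k : Type*} [Field k] [IsAlgClosed k] [CharZero k]
    {n : ℕ} (hn : 1 ≤ n) (x y : Mat n k) (νx νy : k)
    (hx : inGSp n x νx) (hy : inGSp n y νy) :
    (∃ (g : Mat n k) (νg : k), inGSp n g νg ∧ g * x * g⁻¹ = y) ↔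
      (νx = νy ∧ ∃ g : Mat n k, IsUnit g.det ∧ g * x * g⁻¹ = y) := by
  constructor
  · rintro ⟨g, νg, hg, rfl⟩
    exact ⟨(hg.conj hx).multiplier_unique hn hy, g, hg.1, rfl⟩
  · rintro ⟨rfl, h, hh, hxy⟩
    obtain ⟨g, hg, hgx⟩ := exists_inGSp_conj_eq hx hy hh hxy
    exact ⟨g, 1, hg, hgx⟩

/-- Two semisimple elements of `GSp_{2n}(k)`, `k` algebraically closed of characteristic
zero, are `GSp_{2n}(k)`-conjugate iff they have the same symplectic multiplier and are
`GL_{2n}(k)`-conjugate. -/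
theorem gsp_conjugacy {k : Type*} [Field k] [IsAlgClosed k] [CharZero k]
    {n : ℕ} (hn : 1 ≤ n) (x y : Mat n k) (νx νy : k)
    (hx : inGSp n x νx) (hy : inGSp n y νy)
    (hxd : IsDiagonalizable x) (hyd : IsDiagonalizable y) :
    (∃ (g : Mat n k) (νg : k), inGSp n g νg ∧ g * x * g⁻¹ = y) ↔
      (νx = νy ∧ ∃ g : Mat n k, IsUnit g.det ∧ g * x * g⁻¹ = y) :=
  gsp_conjugacy_general hn x y νx νy hx hy
end
end

section
/- Let n ≥ 1, let k = (k_1, …, k_n) be a regular tuple of integers, and let J ∈ GL_{2n}(ℂ) satisfy J D_k(w) J^{−1} = D_k(w)^{−1} for every w ∈ ℂ×. Then J has 2×2 block anti-diagonal form J = [[0, s], [s', 0]] (with n×n blocks), where s and s' are invertible diagonal n×n matrices. -/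
open Matrix

noncomputable section

/-- `D_k(w) = diag(w^{k_1}, …, w^{k_n}, w^{-k_1}, …, w^{-k_n})`. -/
def Dk {n : ℕ} (kk : Fin n → ℤ) (w : ℂ) : Mat n ℂ :=
  Matrix.diagonal (Sum.elim (fun i => w ^ kk i) (fun i => w ^ (-kk i)))

/-- A tuple `(k_1, …, k_n)` of integers is regular if each `k_i` is nonzero and
`k_i ≠ ±k_j` for all `i ≠ j`. -/
def Regular {n : ℕ} (kk : Fin n → ℤ) : Prop :=
  (∀ i, kk i ≠ 0) ∧ ∀ i j, i ≠ j → kk i ≠ kk j ∧ kk i ≠ -kk j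

/-!
Writing `D_k(w) = diag(w^{e_a})` with weights `e = (k, -k)`, the relation `J D_k(2) = D_k(2)⁻¹ J`
read entrywise says `J_{ab} 2^{e_b} = 2^{-e_a} J_{ab}`, so `J_{ab} ≠ 0` forces `e_a + e_b = 0`.
By regularity this happens only for `b = swap a`, i.e. `J` is supported on the two anti-diagonal
block diagonals; invertibility of `J` then makes all these entries nonzero.
-/

namespace Matrix

variable {m n R : Type*}

theorem apply_eq_zero_of_mul_diagonal_eq_diagonal_mul [Fintype m] [Fintype n]
    [DecidableEq m] [DecidableEq n] [CommRing R] [NoZeroDivisors R]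
    {J : Matrix m n R} {d : n → R} {d' : m → R} (h : J * diagonal d = diagonal d' * J)
    {a : m} {b : n} (hne : d b ≠ d' a) : J a b = 0 := by
  have hab : J a b * d b = d' a * J a b := by
    simpa only [mul_diagonal, diagonal_mul] using congrFun (congrFun h a) b
  have : (d b - d' a) * J a b = 0 := by linear_combination hab
  exact (mul_eq_zero.mp this).resolve_left (sub_ne_zero.mpr hne)

theorem mul_eq_mul_of_mul_mul_nonsing_inv_eq [Fintype n] [DecidableEq n] [CommRing R]
    {J A B : Matrix n n R} (hJ : IsUnit J.det) (h : J * A * J⁻¹ = B) : J * A = B * J := by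
  rw [← h, nonsing_inv_mul_cancel_right J _ hJ]

theorem apply_ne_zero_of_isUnit_det [Fintype n] [DecidableEq n] [CommRing R] [Nontrivial R]
    {J : Matrix n n R} (hJ : IsUnit J.det) (σ : n → n) (hsupp : ∀ a b, b ≠ σ a → J a b = 0)
    (a : n) : J a (σ a) ≠ 0 := by
  intro hzero
  have hrow : ∀ b, J a b = 0 := fun b => by
    rcases eq_or_ne b (σ a) with rfl | hb
    exacts [hzero, hsupp a b hb]
  exact not_isUnit_zero (det_eq_zero_of_row_eq_zero a hrow ▸ hJ)

theorem eq_fromBlocks_of_apply_eq_zero_of_ne_swap [DecidableEq m] [Zero R]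
    (J : Matrix (m ⊕ m) (m ⊕ m) R) (hsupp : ∀ a b, b ≠ Sum.swap a → J a b = 0) :
    J = fromBlocks 0 (diagonal fun i => J (.inl i) (.inr i))
      (diagonal fun i => J (.inr i) (.inl i)) 0 := by
  ext (i | i) (j | j)
  · exact hsupp _ _ Sum.inl_ne_inr
  · rcases eq_or_ne i j with rfl | hij
    · simp
    · simpa [hij] using hsupp (.inl i) (.inr j) (by simpa [eq_comm] using hij)
  · rcases eq_or_ne i j with rfl | hij
    · simp
    · simpa [hij] using hsupp (.inr i) (.inl j) (by simpa [eq_comm] using hij)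
  · exact hsupp _ _ Sum.inr_ne_inl

end Matrix

section

variable {n : ℕ} {kk : Fin n → ℤ}

def weights (kk : Fin n → ℤ) : Fin n ⊕ Fin n → ℤ :=
  Sum.elim kk (-kk)

theorem Dk_eq_diagonal (kk : Fin n → ℤ) (w : ℂ) :
    Dk kk w = diagonal fun a => w ^ weights kk a := by
  rw [Dk]
  congr 1
  ext (i | i) <;> rfl

theorem Dk_inv (kk : Fin n → ℤ) {w : ℂ} (hw : w ≠ 0) :
    (Dk kk w)⁻¹ = diagonal fun a => w ^ (-weights kk a) := by
  refine inv_eq_right_inv ?_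
  rw [Dk_eq_diagonal, diagonal_mul_diagonal, ← diagonal_one]
  congr 1
  ext a
  rw [← zpow_add₀ hw, add_neg_cancel, zpow_zero]

theorem Regular.weights_add_ne_zero (hreg : Regular kk) {a b : Fin n ⊕ Fin n}
    (hab : b ≠ Sum.swap a) : weights kk a + weights kk b ≠ 0 := by
  obtain ⟨hnz, hdist⟩ := hreg
  rcases a with i | i <;> rcases b with j | j <;>
    simp only [weights, Sum.elim_inl, Sum.elim_inr, Pi.neg_apply, Sum.swap_inl,
      Sum.swap_inr, ne_eq, Sum.inr.injEq, Sum.inl.injEq] at hab ⊢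
  · rcases eq_or_ne i j with rfl | hij
    · have := hnz i; omega
    · have := (hdist i j hij).2; omega
  · have := (hdist i j (Ne.symm hab)).1; omega
  · have := (hdist j i hab).1; omega
  · rcases eq_or_ne i j with rfl | hij
    · have := hnz i; omega
    · have := (hdist j i hij.symm).2; omega

theorem two_zpow_injective : Function.Injective fun m : ℤ => (2 : ℂ) ^ m := by
  intro m m' h
  have habs : (2 : ℝ) ^ m = (2 : ℝ) ^ m' := by
    simpa only [norm_zpow, Complex.norm_ofNat] using congrArg norm h
  exact zpow_right_injective₀ two_pos (by norm_num) habs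

theorem apply_eq_zero_of_conj_Dk_eq_inv (hreg : Regular kk) {J : Mat n ℂ} (hJ : IsUnit J.det)
    (hconj : J * Dk kk 2 * J⁻¹ = (Dk kk 2)⁻¹) (a b : Fin n ⊕ Fin n) (hab : b ≠ Sum.swap a) :
    J a b = 0 := by
  have hcomm := mul_eq_mul_of_mul_mul_nonsing_inv_eq hJ hconj
  rw [Dk_inv kk two_ne_zero, Dk_eq_diagonal] at hcomm
  refine apply_eq_zero_of_mul_diagonal_eq_diagonal_mul hcomm fun h => ?_
  have := two_zpow_injective h
  exact hreg.weights_add_ne_zero hab (by omega)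

end

theorem conj_to_inverse_block_form_general (n : ℕ) (kk : Fin n → ℤ)
    (hreg : Regular kk) (J : Mat n ℂ) (hJ : IsUnit J.det)
    (hconj : ∀ w : ℂ, w ≠ 0 → J * Dk kk w * J⁻¹ = (Dk kk w)⁻¹) :
    ∃ s s' : Fin n → ℂ, (∀ i, s i ≠ 0) ∧ (∀ i, s' i ≠ 0) ∧
      J = fromBlocks 0 (Matrix.diagonal s) (Matrix.diagonal s') 0 := by
  have hsupp := apply_eq_zero_of_conj_Dk_eq_inv hreg hJ (hconj 2 two_ne_zero)
  exact ⟨_, _, fun i => apply_ne_zero_of_isUnit_det hJ Sum.swap hsupp (.inl i),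
    fun i => apply_ne_zero_of_isUnit_det hJ Sum.swap hsupp (.inr i),
    eq_fromBlocks_of_apply_eq_zero_of_ne_swap J hsupp⟩

/-- If `J` is invertible and `J D_k(w) J⁻¹ = D_k(w)⁻¹` for all `w ∈ ℂ×`, then `J` is
block anti-diagonal, `J = [[0, s], [s', 0]]` with `s`, `s'` invertible diagonal. -/
theorem conj_to_inverse_block_form (n : ℕ) (hn : 1 ≤ n) (kk : Fin n → ℤ)
    (hreg : Regular kk) (J : Mat n ℂ) (hJ : IsUnit J.det)
    (hconj : ∀ w : ℂ, w ≠ 0 → J * Dk kk w * J⁻¹ = (Dk kk w)⁻¹) :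
    ∃ s s' : Fin n → ℂ, (∀ i, s i ≠ 0) ∧ (∀ i, s' i ≠ 0) ∧
      J = fromBlocks 0 (Matrix.diagonal s) (Matrix.diagonal s') 0 :=
  conj_to_inverse_block_form_general n kk hreg J hJ hconj
end
end

section
/- Let N ≥ 1 and let Γ_N = {(z, w) ∈ ℂ× × ℂ× : z^N = w²}, a subgroup of ℂ× × ℂ×. If N is odd, then the map t ↦ (t², t^N) is a group isomorphism from ℂ× onto Γ_N. If N is even, then the map (t, ε) ↦ (t, ε t^{N/2}) is a group isomorphism from ℂ× × {±1} onto Γ_N; in particular Γ_N ≅ ℂ× × ℤ/2ℤ. -/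
/-!
For odd `N = 2k + 1` the inverse of `t ↦ (t², t^N)` is `(z, w) ↦ w / z^k`, since
`(w / z^k)² = w² / z^{2k} = z^N / z^{2k} = z`. For even `N = 2k` the point `(z, w)` lies in `Γ_N`
exactly when `(w / z^k)² = 1`, i.e. when `w / z^k` is a square root of unity, and the square roots
of unity in `ℂ` are `±1`.
-/

noncomputable section

/-- The subgroup `Γ_N = {(z, w) ∈ ℂ× × ℂ× : z^N = w²}` of `ℂ× × ℂ×`. -/
def GammaN (N : ℕ) : Subgroup (ℂˣ × ℂˣ) where
  carrier := {p | p.1 ^ N = p.2 ^ 2}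
  one_mem' := by simp
  mul_mem' := by
    intro a b ha hb
    simp only [Set.mem_setOf_eq] at *
    simp [Prod.fst_mul, Prod.snd_mul, mul_pow, ha, hb]
  inv_mem' := by
    intro a ha
    simp only [Set.mem_setOf_eq] at *
    simp [Prod.fst_inv, Prod.snd_inv, ha]

/-- The subgroup `{±1}` of `ℂ×` of order 2. -/
def pmOne : Subgroup ℂˣ := Subgroup.zpowers (-1 : ℂˣ)

section CommGroup

variable {G : Type*} [CommGroup G] {N : ℕ}

theorem pow_eq_sq_pow_div_two_mul_self (hN : Odd N) (a : G) : a ^ N = (a ^ 2) ^ (N / 2) * a := by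
  conv_lhs => rw [← Nat.two_mul_div_two_add_one_of_odd hN, pow_succ, pow_mul]

theorem pow_eq_pow_div_two_sq (hN : Even N) (a : G) : a ^ N = (a ^ (N / 2)) ^ 2 := by
  conv_lhs => rw [← Nat.two_mul_div_two_of_even hN, pow_mul']

theorem pow_div_sq_pow_div_two (hN : Odd N) (a : G) : a ^ N / (a ^ 2) ^ (N / 2) = a := by
  rw [pow_eq_sq_pow_div_two_mul_self hN, mul_div_cancel_left]

theorem div_pow_div_two_sq_of_pow_eq_sq (hN : Odd N) {z w : G} (h : z ^ N = w ^ 2) :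
    (w / z ^ (N / 2)) ^ 2 = z := by
  rw [div_pow, ← h, pow_eq_sq_pow_div_two_mul_self hN, pow_right_comm, mul_div_cancel_left]

theorem div_pow_div_two_pow_of_pow_eq_sq (hN : Odd N) {z w : G} (h : z ^ N = w ^ 2) :
    (w / z ^ (N / 2)) ^ N = w := by
  rw [pow_eq_sq_pow_div_two_mul_self hN, div_pow_div_two_sq_of_pow_eq_sq hN h, mul_div_cancel]

theorem div_pow_div_two_sq_eq_one_of_pow_eq_sq (hN : Even N) {z w : G} (h : z ^ N = w ^ 2) :
    (w / z ^ (N / 2)) ^ 2 = 1 := by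
  rw [div_pow, ← h, pow_eq_pow_div_two_sq hN, div_self']

end CommGroup

theorem pmOne_eq_rootsOfUnity_two : pmOne = rootsOfUnity 2 ℂ := by
  refine Subgroup.eq_of_le_of_card_ge (Subgroup.zpowers_le.mpr (by simp [mem_rootsOfUnity])) ?_
  rw [Complex.card_rootsOfUnity, pmOne, Nat.card_zpowers, ← orderOf_units]
  simp

theorem mem_pmOne_iff {u : ℂˣ} : u ∈ pmOne ↔ u ^ 2 = 1 := by
  rw [pmOne_eq_rootsOfUnity_two, mem_rootsOfUnity]

theorem nat_card_pmOne : Nat.card pmOne = 2 := by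
  rw [pmOne_eq_rootsOfUnity_two, Complex.card_rootsOfUnity]

def pmOneMulEquivZModTwo : pmOne ≃* Multiplicative (ZMod 2) :=
  mulEquivOfCyclicCardEq (hG := Subgroup.isCyclic_zpowers _) (by simp [nat_card_pmOne])

def gammaNOddEquiv {N : ℕ} (hN : Odd N) : ℂˣ ≃* GammaN N where
  toFun t := ⟨(t ^ 2, t ^ N), pow_right_comm t 2 N⟩
  invFun p := (p : ℂˣ × ℂˣ).2 / (p : ℂˣ × ℂˣ).1 ^ (N / 2)
  left_inv t := pow_div_sq_pow_div_two hN t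
  right_inv p := Subtype.ext <| Prod.ext (div_pow_div_two_sq_of_pow_eq_sq hN p.2)
    (div_pow_div_two_pow_of_pow_eq_sq hN p.2)
  map_mul' s t := by ext <;> simp [mul_pow]

def gammaNEvenEquiv {N : ℕ} (hN : Even N) : ℂˣ × pmOne ≃* GammaN N where
  toFun p := ⟨(p.1, (p.2 : ℂˣ) * p.1 ^ (N / 2)), by
    change p.1 ^ N = _
    rw [mul_pow, mem_pmOne_iff.mp p.2.2, one_mul, pow_eq_pow_div_two_sq hN]⟩
  invFun p := ((p : ℂˣ × ℂˣ).1, ⟨(p : ℂˣ × ℂˣ).2 / (p : ℂˣ × ℂˣ).1 ^ (N / 2),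
    mem_pmOne_iff.mpr (div_pow_div_two_sq_eq_one_of_pow_eq_sq hN p.2)⟩)
  left_inv p := Prod.ext rfl (Subtype.ext (mul_div_cancel_right _ _))
  right_inv p := Subtype.ext (Prod.ext rfl (div_mul_cancel _ _))
  map_mul' s t := Subtype.ext (Prod.ext rfl (by simp [mul_pow, mul_mul_mul_comm]))

theorem gammaN_structure_general (N : ℕ) :
    (Odd N → ∃ e : ℂˣ ≃* GammaN N,
        ∀ t : ℂˣ, (e t : ℂˣ × ℂˣ) = (t ^ 2, t ^ N)) ∧
    (Even N →
      (∃ e : (ℂˣ × pmOne) ≃* GammaN N,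
          ∀ (t : ℂˣ) (ε : pmOne), (e (t, ε) : ℂˣ × ℂˣ) = (t, (ε : ℂˣ) * t ^ (N / 2))) ∧
      Nonempty (GammaN N ≃* ℂˣ × Multiplicative (ZMod 2))) :=
  ⟨fun hN => ⟨gammaNOddEquiv hN, fun _ => rfl⟩,
    fun hN => ⟨⟨gammaNEvenEquiv hN, fun _ _ => rfl⟩,
      ⟨(gammaNEvenEquiv hN).symm.trans ((MulEquiv.refl ℂˣ).prodCongr pmOneMulEquivZModTwo)⟩⟩⟩

/-- If `N` is odd, `t ↦ (t², t^N)` is an isomorphism `ℂ× ≅ Γ_N`; if `N` is even,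
`(t, ε) ↦ (t, ε t^{N/2})` is an isomorphism `ℂ× × {±1} ≅ Γ_N`, and in particular
`Γ_N ≅ ℂ× × ℤ/2ℤ`. -/
theorem gammaN_structure (N : ℕ) (hN : 1 ≤ N) :
    (Odd N → ∃ e : ℂˣ ≃* GammaN N,
        ∀ t : ℂˣ, (e t : ℂˣ × ℂˣ) = (t ^ 2, t ^ N)) ∧
    (Even N →
      (∃ e : (ℂˣ × pmOne) ≃* GammaN N,
          ∀ (t : ℂˣ) (ε : pmOne), (e (t, ε) : ℂˣ × ℂˣ) = (t, (ε : ℂˣ) * t ^ (N / 2))) ∧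
      Nonempty (GammaN N ≃* ℂˣ × Multiplicative (ZMod 2))) :=
  gammaN_structure_general N
end
end
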